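/- arXiv:1704.05570 — 3 statements merged into one kernel-verified Lean document; each statement's English description precedes it below -/
import Mathlib

section
/- Define a sequence (y_ℓ) of rational numbers by y_0 = y_1 = y_2 = 1 and y_{ℓ+3} = (y_{ℓ+2}·y_{ℓ+1} + 2)/y_ℓ for all ℓ ≥ 0. Then every y_ℓ is a positive integer. -/
private def cc (n : ℕ) : ℤ := if n % 2 = 0 then 4 else 2

private def zz : ℕ → ℤ
  | 0 => 1
  | 1 => 1
  | 2 => 1
  | (n+3) => cc n * zz (n+2) - zz (n+1)

private lemma cc_ge (n : ℕ) : 2 ≤ cc n := by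
  unfold cc; split <;> norm_num

private lemma cc_period (n : ℕ) : cc (n+2) = cc n := by
  unfold cc; simp [Nat.add_mod]

private lemma zz_shift : ∀ n, zz (n+2) = cc (n+1) * zz (n+1) - zz n
  | 0 => by simp [zz, cc]
  | (m+1) => by rw [show m+1+2 = m+3 from rfl, zz, cc_period]

private lemma zz_pos_mono : ∀ n, 0 < zz n ∧ zz n ≤ zz (n+1) := by
  intro n
  induction n with
  | zero => simp [zz]
  | succ m ih =>
    obtain ⟨h1, h2⟩ := ih
    refine ⟨lt_of_lt_of_le h1 h2, ?_⟩
    cases m with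
    | zero => simp [zz]
    | succ k =>
      rw [show k+1+1+1 = k+3 from rfl, zz]
      have := cc_ge k
      nlinarith [h1, h2]

private lemma zz_inv : ∀ n, zz (n+3) * zz n = zz (n+2) * zz (n+1) + 2 := by
  intro n
  induction n with
  | zero => simp [zz, cc]
  | succ m ih =>
    have hs : zz (m+4) = cc (m+1) * zz (m+3) - zz (m+2) := by
      have := zz_shift (m+2)
      rwa [show m+2+2 = m+4 from rfl, show m+2+1 = m+3 from rfl, cc_period] at this
    have hs2 : zz (m+2) = cc (m+1) * zz (m+1) - zz m := zz_shift m
    rw [show m+1+3 = m+4 from rfl, show m+1+2 = m+3 from rfl, show m+1+1 = m+2 from rfl, hs]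
    linear_combination ih - zz (m+3) * hs2

/-- The cube recurrence in a cylinder with `m = 2`, `n = 1`, all initial variables set to `1`:
`y 0 = y 1 = y 2 = 1` and `y (ℓ+3) = (y (ℓ+2) * y (ℓ+1) + 2) / y ℓ`.  Every value `y ℓ`
is a positive integer. -/
theorem cube_cylinder_unit_values_are_positive_integers
    (y : ℕ → ℚ) (h0 : y 0 = 1) (h1 : y 1 = 1) (h2 : y 2 = 1)
    (hrec : ∀ ℓ : ℕ, y (ℓ + 3) = (y (ℓ + 2) * y (ℓ + 1) + 2) / y ℓ) :
    ∀ ℓ : ℕ, ∃ n : ℕ, 0 < n ∧ y ℓ = n := by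
  have key : ∀ n, y n = (zz n : ℚ) ∧ y (n+1) = (zz (n+1) : ℚ) ∧ y (n+2) = (zz (n+2) : ℚ) := by
    intro n
    induction n with
    | zero => refine ⟨?_, ?_, ?_⟩ <;> simp [zz, h0, h1, h2]
    | succ m ih =>
      obtain ⟨e0, e1, e2⟩ := ih
      refine ⟨e1, e2, ?_⟩
      have hz : (0:ℚ) < (zz m : ℚ) := by exact_mod_cast (zz_pos_mono m).1
      have hinv : (zz (m+3) : ℚ) * (zz m : ℚ) = (zz (m+2) : ℚ) * (zz (m+1) : ℚ) + 2 := by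
        exact_mod_cast congrArg (fun t : ℤ => (t : ℚ)) (zz_inv m)
      rw [show m+1+2 = m+3 from rfl, hrec m, e0, e1, e2]
      field_simp
      linarith [hinv]
  intro ℓ
  have hp := (zz_pos_mono ℓ).1
  refine ⟨(zz ℓ).toNat, ?_, ?_⟩
  · omega
  · rw [(key ℓ).1]
    have : ((zz ℓ).toNat : ℤ) = zz ℓ := Int.toNat_of_nonneg hp.le
    exact_mod_cast congrArg (fun t : ℤ => (t : ℚ)) this.symm
end

section
/- Define a sequence (y_ℓ) by y_0 = y_1 = y_2 = 1 and y_{ℓ+3} = (y_{ℓ+2}·y_{ℓ+1} + 2)/y_ℓ. Then for all ℓ ≥ 0, y_{ℓ+4} - 6·y_{ℓ+2} + y_ℓ = 0. -/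
/-- The sequence defined by `y 0 = y 1 = y 2 = 1` and
`y (ℓ+3) = (y (ℓ+2) * y (ℓ+1) + 2) / y ℓ` satisfies the linear recurrence
`y (ℓ+4) - 6 * y (ℓ+2) + y ℓ = 0` for all `ℓ ≥ 0`. -/
theorem cube_cylinder_unit_linear_recurrence
    (y : ℕ → ℚ) (h0 : y 0 = 1) (h1 : y 1 = 1) (h2 : y 2 = 1)
    (hrec : ∀ ℓ : ℕ, y (ℓ + 3) = (y (ℓ + 2) * y (ℓ + 1) + 2) / y ℓ) :
    ∀ ℓ : ℕ, y (ℓ + 4) - 6 * y (ℓ + 2) + y ℓ = 0 := by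
  have key : ∀ ℓ : ℕ, 0 < y ℓ ∧ 0 < y (ℓ + 1) ∧ 0 < y (ℓ + 2) ∧
      y (ℓ + 4) = 6 * y (ℓ + 2) - y ℓ := by
    intro ℓ
    induction ℓ with
    | zero =>
      have h3 : y 3 = 3 := by have := hrec 0; rw [h0, h1, h2] at this; norm_num at this; exact this
      have h4 : y 4 = 5 := by have := hrec 1; rw [h1, h2, h3] at this; norm_num at this; exact this
      refine ⟨by rw [h0]; norm_num, by rw [h1]; norm_num, by rw [h2]; norm_num, ?_⟩
      rw [h4, h2, h0]; norm_num
    | succ n ih =>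
      obtain ⟨p0, p1, p2, hlin⟩ := ih
      have hne0 : y n ≠ 0 := ne_of_gt p0
      have hne1 : y (n + 1) ≠ 0 := ne_of_gt p1
      have hne2 : y (n + 2) ≠ 0 := ne_of_gt p2
      have hmul0 : y (n + 3) * y n = y (n + 2) * y (n + 1) + 2 := by
        rw [hrec n, div_mul_cancel₀ _ hne0]
      have p3 : 0 < y (n + 3) := by
        rw [hrec n]
        exact div_pos (by positivity) p0
      refine ⟨p1, p2, p3, ?_⟩
      have h5 : y (n + 1 + 4) = (y (n + 4) * y (n + 3) + 2) / y (n + 2) := by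
        have := hrec (n + 2)
        convert this using 3 <;> ring_nf
      rw [h5, hlin]
      rw [show n + 1 + 2 = n + 3 from rfl, show n + 1 + 1 = n + 2 from rfl, div_eq_iff hne2]
      nlinarith [hmul0]
  intro ℓ
  have := (key ℓ).2.2.2
  linarith
end

section
/- Define a sequence (y_ℓ) of rational functions in three variables x_a, x_b, x_c by y_0 = x_a, y_1 = x_b, y_2 = x_c, and y_{ℓ+3} = (y_{ℓ+2}·y_{ℓ+1} + 2)/y_ℓ. Then for all sufficiently large ℓ, y_{ℓ+4} − J·y_{ℓ+2} + y_ℓ = 0, where J = x_c/x_a + x_a/x_c + 2/(x_b·x_c) + 2/(x_a·x_b). -/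
/-- The field of rational functions in three variables `x_a, x_b, x_c` over `ℚ`. -/
abbrev Kfield : Type _ := FractionRing (MvPolynomial (Fin 3) ℚ)

/-- The variable `x_i` viewed inside the field of rational functions. -/
noncomputable def xv (i : Fin 3) : Kfield :=
  algebraMap (MvPolynomial (Fin 3) ℚ) Kfield (MvPolynomial.X i)

namespace CubeAux

abbrev P3 := MvPolynomial (Fin 3) ℚ

/-- Polynomials with nonnegative coefficients, nonzero. -/
def PosPoly (f : P3) : Prop := f ≠ 0 ∧ ∀ m, 0 ≤ f.coeff m

noncomputable def φ : P3 →+* Kfield := algebraMap P3 Kfield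

lemma φ_inj : Function.Injective φ := IsFractionRing.injective P3 Kfield

lemma φ_ne_zero {f : P3} (hf : f ≠ 0) : φ f ≠ 0 := by
  simpa using (map_ne_zero_iff φ φ_inj).mpr hf

lemma PosPoly.mul {f g : P3} (hf : PosPoly f) (hg : PosPoly g) : PosPoly (f * g) :=
  ⟨mul_ne_zero hf.1 hg.1, fun m => by
    rw [MvPolynomial.coeff_mul]
    exact Finset.sum_nonneg fun x _ => mul_nonneg (hf.2 _) (hg.2 _)⟩

lemma PosPoly.add {f g : P3} (hf : PosPoly f) (hg : PosPoly g) : PosPoly (f + g) := by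
  refine ⟨?_, fun m => by rw [MvPolynomial.coeff_add]; exact add_nonneg (hf.2 m) (hg.2 m)⟩
  obtain ⟨m, hm⟩ := MvPolynomial.ne_zero_iff.mp hf.1
  intro h
  have hc := congrArg (MvPolynomial.coeff m) h
  rw [MvPolynomial.coeff_add, MvPolynomial.coeff_zero] at hc
  have h1 := hf.2 m
  have h2 := hg.2 m
  have : MvPolynomial.coeff m f = 0 := by linarith
  exact hm this

lemma PosPoly.one : PosPoly (1 : P3) := by
  refine ⟨one_ne_zero, fun m => ?_⟩
  rw [MvPolynomial.coeff_one]
  split <;> norm_num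

lemma PosPoly.two : PosPoly (2 : P3) := by
  have h : (2 : P3) = 1 + 1 := by norm_num
  rw [h]; exact PosPoly.one.add PosPoly.one

lemma PosPoly.X (i : Fin 3) : PosPoly (MvPolynomial.X i : P3) := by
  refine ⟨MvPolynomial.X_ne_zero i, fun m => ?_⟩
  rw [MvPolynomial.coeff_X']
  split <;> norm_num

/-- Positive elements of the fraction field. -/
def Pos (q : Kfield) : Prop := ∃ f g : P3, PosPoly f ∧ PosPoly g ∧ q * φ g = φ f

lemma Pos.ne_zero {q : Kfield} (hq : Pos q) : q ≠ 0 := by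
  obtain ⟨f, g, hf, hg, h⟩ := hq
  intro h0
  rw [h0, zero_mul] at h
  exact φ_ne_zero hf.1 h.symm

lemma Pos.mul {q r : Kfield} (hq : Pos q) (hr : Pos r) : Pos (q * r) := by
  obtain ⟨f, g, hf, hg, h⟩ := hq
  obtain ⟨f', g', hf', hg', h'⟩ := hr
  exact ⟨f * f', g * g', hf.mul hf', hg.mul hg', by
    rw [map_mul, map_mul]
    calc q * r * (φ g * φ g') = (q * φ g) * (r * φ g') := by ring
      _ = φ f * φ f' := by rw [h, h']⟩

lemma Pos.add {q r : Kfield} (hq : Pos q) (hr : Pos r) : Pos (q + r) := by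
  obtain ⟨f, g, hf, hg, h⟩ := hq
  obtain ⟨f', g', hf', hg', h'⟩ := hr
  exact ⟨f * g' + f' * g, g * g', (hf.mul hg').add (hf'.mul hg), hg.mul hg', by
    rw [map_add, map_mul, map_mul, map_mul]
    calc (q + r) * (φ g * φ g') = (q * φ g) * φ g' + (r * φ g') * φ g := by ring
      _ = φ f * φ g' + φ f' * φ g := by rw [h, h']⟩

lemma Pos.div {q r : Kfield} (hq : Pos q) (hr : Pos r) : Pos (q / r) := by
  have hr0 : r ≠ 0 := hr.ne_zero
  obtain ⟨f, g, hf, hg, h⟩ := hq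
  obtain ⟨f', g', hf', hg', h'⟩ := hr
  have hg0 : φ g ≠ 0 := φ_ne_zero hg.1
  refine ⟨f * g', g * f', hf.mul hg', hg.mul hf', ?_⟩
  rw [map_mul, map_mul, ← h, ← h']
  field_simp

lemma Pos.two : Pos (2 : Kfield) :=
  ⟨2, 1, PosPoly.two, PosPoly.one, by rw [map_one, map_ofNat, mul_one]⟩

lemma Pos.xv (i : Fin 3) : Pos (xv i) :=
  ⟨MvPolynomial.X i, 1, PosPoly.X i, PosPoly.one, by rw [map_one, mul_one]; rfl⟩

end CubeAux

set_option maxHeartbeats 800000 in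
/-- Cube recurrence in a cylinder with `m = 2`, `n = 1` (Theorem 2.5 of the paper specialized):
the sequence `y 0 = x_a`, `y 1 = x_b`, `y 2 = x_c`,
`y (ℓ+3) = (y (ℓ+2) y (ℓ+1) + 2) / y ℓ` satisfies, for all sufficiently large `ℓ`,
`y (ℓ+4) − J · y (ℓ+2) + y ℓ = 0` where
`J = x_c/x_a + x_a/x_c + 2/(x_b x_c) + 2/(x_a x_b)`. -/
theorem cube_cylinder_m2_n1_linear_recurrence
    (y : ℕ → Kfield) (h0 : y 0 = xv 0) (h1 : y 1 = xv 1) (h2 : y 2 = xv 2)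
    (hrec : ∀ ℓ : ℕ, y (ℓ + 3) = (y (ℓ + 2) * y (ℓ + 1) + 2) / y ℓ) :
    ∃ N : ℕ, ∀ ℓ ≥ N,
      y (ℓ + 4) -
        (xv 2 / xv 0 + xv 0 / xv 2 + 2 / (xv 1 * xv 2) + 2 / (xv 0 * xv 1)) * y (ℓ + 2) +
        y ℓ = 0 := by
  classical
  -- every term of the sequence is "positive", hence nonzero
  have key : ∀ ℓ, CubeAux.Pos (y ℓ) ∧ CubeAux.Pos (y (ℓ + 1)) ∧ CubeAux.Pos (y (ℓ + 2)) := by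
    intro ℓ
    induction ℓ with
    | zero =>
      refine ⟨?_, ?_, ?_⟩
      · rw [h0]; exact CubeAux.Pos.xv 0
      · rw [h1]; exact CubeAux.Pos.xv 1
      · rw [h2]; exact CubeAux.Pos.xv 2
    | succ n ih =>
      refine ⟨ih.2.1, ih.2.2, ?_⟩
      rw [show n + 1 + 2 = n + 3 from rfl, hrec n]
      exact ((ih.2.2.mul ih.2.1).add CubeAux.Pos.two).div ih.1
  have hne : ∀ ℓ, y ℓ ≠ 0 := fun ℓ => (key ℓ).1.ne_zero
  have hx : ∀ i : Fin 3, xv i ≠ 0 := fun i => (CubeAux.Pos.xv i).ne_zero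
  -- the multiplicative form of the recurrence
  have hp : ∀ ℓ, y (ℓ + 3) * y ℓ = y (ℓ + 2) * y (ℓ + 1) + 2 := by
    intro ℓ
    rw [hrec ℓ, div_mul_cancel₀ _ (hne ℓ)]
  -- the period-2 invariant S
  set S : ℕ → Kfield := fun ℓ => (y (ℓ + 2) + y ℓ) / y (ℓ + 1) with hSdef
  have hdef : ∀ ℓ, y (ℓ + 2) + y ℓ = S ℓ * y (ℓ + 1) := by
    intro ℓ
    rw [hSdef]
    exact (div_mul_cancel₀ _ (hne (ℓ + 1))).symm
  have hS : ∀ ℓ, S (ℓ + 2) = S ℓ := by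
    intro ℓ
    rw [hSdef]
    rw [div_eq_div_iff (hne (ℓ + 3)) (hne (ℓ + 1))]
    linear_combination hp (ℓ + 1) - hp ℓ
  have hprod : ∀ ℓ, S ℓ * S (ℓ + 1) = S 0 * S 1 := by
    intro ℓ
    induction ℓ with
    | zero => rfl
    | succ n ih => rw [hS n, mul_comm]; exact ih
  -- identify the constant S 0 * S 1
  have hJ : S 0 * S 1 =
      (xv 2 / xv 0 + xv 0 / xv 2 + 2 / (xv 1 * xv 2) + 2 / (xv 0 * xv 1)) + 2 := by
    have h3 : y 3 = (xv 2 * xv 1 + 2) / xv 0 := by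
      rw [hrec 0, h0, h1, h2]
    rw [hSdef]
    simp only [h0, h1, h2, h3]
    have ha := hx 0
    have hb := hx 1
    have hc := hx 2
    field_simp
    ring
  refine ⟨0, fun ℓ _ => ?_⟩
  have e1 : y (ℓ + 4) + y (ℓ + 2) = S ℓ * y (ℓ + 3) := by
    have := hdef (ℓ + 2)
    rwa [hS ℓ] at this
  have e2 := hdef (ℓ + 1)
  have e3 := hdef ℓ
  have e4 : S ℓ * S (ℓ + 1) =
      (xv 2 / xv 0 + xv 0 / xv 2 + 2 / (xv 1 * xv 2) + 2 / (xv 0 * xv 1)) + 2 :=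
    (hprod ℓ).trans hJ
  linear_combination e1 + e3 + S ℓ * e2 + y (ℓ + 2) * e4
end
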